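/- Let p : ℝ → [0,1] be 1-periodic with p(0) = 1, satisfying the QMF condition p(ξ/2) + p(ξ/2 + 1/2) = 1 for every ξ ∈ [0,1]. Suppose p satisfies Cohen's condition: there is a compact set T ⊂ ℝ such that for every ξ ∈ [0,1] there is k ∈ ℤ with ξ + k ∈ T, and inf{ p(ζ/2^j) : j ≥ 1, ζ ∈ T } > 0. Then there is no nonempty subset B of (0,1), closed in ℝ, that is invariant for p, i.e. with p(ξ) = 0 for every ξ ∈ B_e^c. -/
import Mathlib


open Set MeasureTheory Filter

open Classical in
/-- The doubling map `θ` on `[0,1)`: `θ(ξ) = 2ξ` for `ξ < 1/2`, `2ξ − 1` otherwise. -/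
noncomputable def theta (ξ : ℝ) : ℝ := if ξ < 1/2 then 2*ξ else 2*ξ - 1

open Classical in
/-- `ξ* = ξ + 1/2` for `ξ ∈ [0,1/2]` and `ξ − 1/2` for `ξ ∈ (1/2,1]`. -/
noncomputable def starR (ξ : ℝ) : ℝ := if ξ ≤ 1/2 then ξ + 1/2 else ξ - 1/2


/-- The exit set `B_e^c = {ξ/2 + j/2 : ξ ∈ B, j ∈ {0,1}} ∩ ([0,1] \ B)`. -/
def BeI (B : Set ℝ) : Set ℝ :=
  {y | ∃ ξ ∈ B, y = ξ/2 ∨ y = ξ/2 + 1/2} ∩ (Set.Icc (0:ℝ) 1 \ B)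

/-- The barrier set `B_b = (B_e^c)*`. -/
noncomputable def BbI (B : Set ℝ) : Set ℝ := starR '' BeI B


/-- If a QMF function `p` satisfies Cohen's condition, then no nonempty
closed subset of `(0,1)` is invariant for `p`. -/
theorem no_invariant_set_of_cohen (p : ℝ → ℝ) (hrange : ∀ ξ, p ξ ∈ Set.Icc (0:ℝ) 1)
    (hper : Function.Periodic p 1) (h0 : p 0 = 1)
    (hqmf : ∀ ξ ∈ Set.Icc (0:ℝ) 1, p (ξ/2) + p (ξ/2 + 1/2) = 1)
    (T : Set ℝ) (hT : IsCompact T)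
    (hcover : ∀ ξ ∈ Set.Icc (0:ℝ) 1, ∃ k : ℤ, ξ + (k : ℝ) ∈ T)
    (hinf : ∃ c > (0:ℝ), ∀ j : ℕ, 1 ≤ j → ∀ ζ ∈ T, c ≤ p (ζ / 2 ^ j)) :
    ¬ ∃ B : Set ℝ, B.Nonempty ∧ B ⊆ Set.Ioo 0 1 ∧ IsClosed B ∧
        ∀ ξ ∈ BeI B, p ξ = 0 := by
  rintro ⟨B, ⟨ξ0, hξ0⟩, hBsub, hBclosed, hinv⟩
  obtain ⟨c, hc, hcp⟩ := hinf
  obtain ⟨k0, hk0⟩ := hcover ξ0 (Set.Ioo_subset_Icc_self (hBsub hξ0))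
  set ζ : ℝ := ξ0 + (k0 : ℝ) with hζ
  -- periodicity for integer shifts
  have hperZ : ∀ (x : ℝ) (m : ℤ), p (x + (m : ℝ)) = p x := by
    intro x m
    have := (hper.int_mul m) x
    simpa using this
  -- key induction: backward orbit stays in B
  have key : ∀ j : ℕ, ∃ ξ ∈ B, ∃ k : ℤ, ζ / 2 ^ j = ξ + (k : ℝ) := by
    intro j
    induction j with
    | zero => exact ⟨ξ0, hξ0, k0, by simp [hζ]⟩
    | succ n ih =>
      obtain ⟨ξ, hξB, k, hk⟩ := ih
      obtain ⟨hξ0', hξ1'⟩ := hBsub hξB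
      have hstep : ∀ ξ' : ℝ, (ξ' = ξ/2 ∨ ξ' = ξ/2 + 1/2) → ∀ m : ℤ,
          ζ / 2 ^ (n+1) = ξ' + (m : ℝ) → ∃ ξ'' ∈ B, ∃ k' : ℤ,
          ζ / 2 ^ (n+1) = ξ'' + (k' : ℝ) := by
        intro ξ' hform m heq
        refine ⟨ξ', ?_, m, heq⟩
        by_contra hnot
        have hIcc : ξ' ∈ Set.Icc (0:ℝ) 1 := by
          rcases hform with h | h <;> constructor <;> rw [h] <;> linarith
        have hmem : ξ' ∈ BeI B := ⟨⟨ξ, hξB, hform⟩, hIcc, hnot⟩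
        have hz : p ξ' = 0 := hinv _ hmem
        have hp : p (ζ / 2 ^ (n+1)) = p ξ' := by rw [heq, hperZ]
        have := hcp (n+1) (by omega) ζ hk0
        rw [hp, hz] at this
        linarith
      rcases Int.even_or_odd k with ⟨m, hm⟩ | ⟨m, hm⟩
      · refine hstep (ξ/2) (Or.inl rfl) m ?_
        have : ζ / 2 ^ (n+1) = (ξ + (k:ℝ)) / 2 := by
          rw [← hk]; ring
        rw [this, hm]; push_cast; ring
      · refine hstep (ξ/2 + 1/2) (Or.inr rfl) m ?_
        have : ζ / 2 ^ (n+1) = (ξ + (k:ℝ)) / 2 := by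
          rw [← hk]; ring
        rw [this, hm]; push_cast; ring
  -- B is closed and bounded, so its inf and sup lie in B ⊆ (0,1)
  have hne : B.Nonempty := ⟨ξ0, hξ0⟩
  have hbdd : BddBelow B := ⟨0, fun x hx => le_of_lt (hBsub hx).1⟩
  have hbdda : BddAbove B := ⟨1, fun x hx => le_of_lt (hBsub hx).2⟩
  have hmB : sInf B ∈ B := hBclosed.csInf_mem hne hbdd
  have hMB : sSup B ∈ B := hBclosed.csSup_mem hne hbdda
  set m0 : ℝ := sInf B
  set M0 : ℝ := sSup B
  have hm0 : 0 < m0 := (hBsub hmB).1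
  have hM0 : M0 < 1 := (hBsub hMB).2
  set ε : ℝ := min m0 (1 - M0) with hε
  have hεpos : 0 < ε := lt_min hm0 (by linarith)
  -- choose j large
  obtain ⟨j, hj⟩ := pow_unbounded_of_one_lt (|ζ| / ε) (by norm_num : (1:ℝ) < 2)
  have h2j : (0:ℝ) < 2 ^ j := by positivity
  have hsmall : |ζ| / 2 ^ j < ε := by
    rw [div_lt_iff₀ h2j]
    have := (div_lt_iff₀ hεpos).mp hj
    linarith [this]
  obtain ⟨ξ, hξB, k, hk⟩ := key j
  have hmle : m0 ≤ ξ := csInf_le hbdd hξB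
  have hMge : ξ ≤ M0 := le_csSup hbdda hξB
  have habs : |ζ / 2 ^ j| < ε := by
    rwa [abs_div, abs_of_pos h2j]
  have h1 : ζ / 2 ^ j < ε := lt_of_le_of_lt (le_abs_self _) habs
  have h2 : -ε < ζ / 2 ^ j := neg_lt_of_abs_lt habs
  have hεm : ε ≤ m0 := min_le_left _ _
  have hεM : ε ≤ 1 - M0 := min_le_right _ _
  -- then -k = ξ - ζ/2^j ∈ (0,1), contradiction for an integer
  have hk' : (k : ℝ) = ζ / 2 ^ j - ξ := by linarith [hk]
  have hpos : (0:ℝ) < -(k:ℝ) := by rw [hk']; push_cast; linarith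
  have hlt : -(k:ℝ) < 1 := by rw [hk']; push_cast; linarith
  have hposZ : (0:ℤ) < -k := by exact_mod_cast hpos
  have hltZ : -k < (1:ℤ) := by exact_mod_cast hlt
  omega
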